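/- Let Y = f(P) + ε where P = p(X, W), f is measurable, and ε is integrable and independent of (X, W). If E[Y | X, W] is almost surely equal to E[Y | W] (i.e., the conditional mean does not depend on X), then the conditional distribution of Y given (X, W) equals the conditional distribution of Y given W almost surely; i.e., for every measurable set A, P(Y ∈ A | X, W) = P(Y ∈ A | W) a.s. -/

import Mathlib

open MeasureTheory ProbabilityTheory

/-!
Write `G = f(p(X, W))`. Since `ε` is independent of `(X, W)`, and hence of `W`, the two conditional
means are `G + E ε` and `E[G | W] + E ε`; so the hypothesis says that `G` agrees a.s. with the
`σ(W)`-measurable `H = E[G | W]`. Independence also freezes `G` inside the conditional probability: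
`P(Y ∈ A | X, W) = φ(G)` with `φ t = P(t + ε ∈ A)`, which is a.s. the `σ(W)`-measurable `φ(H)`.
A conditional expectation given `σ(X, W)` that is `σ(W)`-measurable is, by the tower property,
also the conditional expectation given `σ(W)`.
-/

section

variable {Ω E : Type*} [NormedAddCommGroup E] [NormedSpace ℝ E] [CompleteSpace E]
  {m₀ : MeasurableSpace Ω} {μ : Measure Ω}

theorem condExp_ae_eq_condExp_of_le_of_aestronglyMeasurable {m m' : MeasurableSpace Ω}
    {g : Ω → E} (hm : m ≤ m') (hm' : m' ≤ m₀) [SigmaFinite (μ.trim hm')]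
    [SigmaFinite (μ.trim (hm.trans hm'))] (h : AEStronglyMeasurable[m] (μ[g | m']) μ) :
    μ[g | m] =ᵐ[μ] μ[g | m'] :=
  (condExp_condExp_of_le hm hm').symm.trans
    (condExp_of_aestronglyMeasurable' (hm.trans hm') h integrable_condExp)

theorem ae_eq_condExp_of_condExp_add_eq_of_indep {mε m m' : MeasurableSpace Ω} {G ε : Ω → E}
    (hmε : mε ≤ m₀) (hm : m ≤ m') (hm' : m' ≤ m₀) [SigmaFinite (μ.trim hm')]
    [SigmaFinite (μ.trim (hm.trans hm'))]
    (hG : StronglyMeasurable[m'] G) (hGint : Integrable G μ)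
    (hε : StronglyMeasurable[mε] ε) (hεint : Integrable ε μ) (hindep : Indep mε m' μ)
    (hmean : μ[G + ε | m'] =ᵐ[μ] μ[G + ε | m]) :
    G =ᵐ[μ] μ[G | m] := by
  have hεm' : μ[ε | m'] =ᵐ[μ] fun _ => μ[ε] := condExp_indep_eq hmε hm' hε hindep
  have hεm : μ[ε | m] =ᵐ[μ] fun _ => μ[ε] :=
    condExp_indep_eq hmε (hm.trans hm') hε (indep_of_indep_of_le_right hindep hm)
  have hsplit_m' : μ[G + ε | m'] =ᵐ[μ] fun ω => G ω + μ[ε] := by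
    filter_upwards [condExp_add hGint hεint m', hεm'] with ω hω hεω
    rw [hω, Pi.add_apply, condExp_of_stronglyMeasurable hm' hG hGint, hεω]
  have hsplit_m : μ[G + ε | m] =ᵐ[μ] fun ω => μ[G | m] ω + μ[ε] := by
    filter_upwards [condExp_add hGint hεint m, hεm] with ω hω hεω
    rw [hω, Pi.add_apply, hεω]
  filter_upwards [hsplit_m'.symm.trans (hmean.trans hsplit_m)] with ω hω
  exact add_right_cancel hω

theorem condExp_prod_ae_eq_integral_map_of_indepFun {γ δ : Type*} [MeasurableSpace γ]
    [MeasurableSpace δ] [StandardBorelSpace δ] [Nonempty δ] [IsFiniteMeasure μ]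
    {V : Ω → γ} {ε : Ω → δ} (hV : Measurable V) (hε : Measurable ε) (hindep : IndepFun V ε μ)
    {F : γ × δ → E} (hF : StronglyMeasurable F) (hint : Integrable (fun ω => F (V ω, ε ω)) μ) :
    μ[fun ω => F (V ω, ε ω) | MeasurableSpace.comap V inferInstance]
      =ᵐ[μ] fun ω => ∫ e, F (V ω, e) ∂(μ.map ε) := by
  have hcond : condDistrib ε V μ =ᵐ[μ.map V] Kernel.const γ (μ.map ε) := by
    rw [condDistrib_ae_eq_iff_measure_eq_compProd V hε.aemeasurable, Measure.compProd_const]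
    exact (indepFun_iff_map_prod_eq_prod_map_map hV.aemeasurable hε.aemeasurable).mp hindep
  filter_upwards [condExp_prod_ae_eq_integral_condDistrib hV hε.aemeasurable hF hint,
    ae_of_ae_map hV.aemeasurable hcond] with ω hω hω'
  rw [hω, hω', Kernel.const_apply]

end

/-- In the additive noise model `Y = f(p(X,W)) + ε` with `ε` independent of `(X,W)`,
if `E[Y | X, W] = E[Y | W]` a.s., then for every measurable set `A`,
`P(Y ∈ A | X, W) = P(Y ∈ A | W)` a.s. -/
theorem anm_mean_indep_implies_distributional_indep
    {Ω α β : Type*} {m0 : MeasurableSpace Ω} [MeasurableSpace α] [MeasurableSpace β]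
    (μ : Measure Ω) [IsProbabilityMeasure μ]
    (X : Ω → α) (W : Ω → β) (hX : Measurable X) (hW : Measurable W)
    (p : α × β → ℝ) (hp : Measurable p) (f : ℝ → ℝ) (hf : Measurable f)
    (ε : Ω → ℝ) (hε : Measurable ε) (hεint : Integrable ε μ)
    (hindep : IndepFun (fun ω => (X ω, W ω)) ε μ)
    (Y : Ω → ℝ) (hY : Y = fun ω => f (p (X ω, W ω)) + ε ω)
    (hfint : Integrable (fun ω => f (p (X ω, W ω))) μ)
    (hmean :
      μ[Y | MeasurableSpace.comap (fun ω => (X ω, W ω)) inferInstance]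
        =ᵐ[μ] μ[Y | MeasurableSpace.comap W inferInstance]) :
    ∀ A : Set ℝ, MeasurableSet A →
      (μ⟦Y ⁻¹' A | MeasurableSpace.comap (fun ω => (X ω, W ω)) inferInstance⟧)
        =ᵐ[μ] μ⟦Y ⁻¹' A | MeasurableSpace.comap W inferInstance⟧ := by
  intro A hA
  subst hY
  set V := fun ω => (X ω, W ω)
  have hV : Measurable V := hX.prodMk hW
  have hWV : MeasurableSpace.comap W inferInstance ≤ MeasurableSpace.comap V inferInstance :=
    (measurable_snd.comp (comap_measurable V)).comap_le
  have hG : (fun ω => f (p (V ω)))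
      =ᵐ[μ] μ[fun ω => f (p (V ω)) | MeasurableSpace.comap W inferInstance] :=
    ae_eq_condExp_of_condExp_add_eq_of_indep hε.comap_le hWV hV.comap_le
      ((hf.comp hp).comp (comap_measurable V)).stronglyMeasurable hfint
      (comap_measurable ε).stronglyMeasurable hεint
      ((IndepFun_iff_Indep ε V μ).mp hindep.symm) hmean
  set φ : ℝ → ℝ := fun t => ∫ e, A.indicator 1 (t + e) ∂(μ.map ε)
  have hind : StronglyMeasurable fun q : ℝ × ℝ => A.indicator (1 : ℝ → ℝ) (q.1 + q.2) :=
    (stronglyMeasurable_const.indicator hA).comp_measurable measurable_add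
  have hfreeze : μ⟦(fun ω => f (p (V ω)) + ε ω) ⁻¹' A | MeasurableSpace.comap V inferInstance⟧
      =ᵐ[μ] φ ∘ μ[fun ω => f (p (V ω)) | MeasurableSpace.comap W inferInstance] :=
    (condExp_prod_ae_eq_integral_map_of_indepFun hV hε hindep
      (hind.comp_measurable ((hf.comp hp).prodMap measurable_id))
      ((integrable_const 1).indicator (((hf.comp hp).comp hV).add hε hA))).trans (hG.fun_comp φ)
  exact (condExp_ae_eq_condExp_of_le_of_aestronglyMeasurable hWV hV.comap_le
    ⟨_, hind.integral_prod_right'.comp_measurable stronglyMeasurable_condExp.measurable,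
      hfreeze⟩).symm
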